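/- Let R ∈ (0, π]. Then the Fourier coefficients of the Hegselmann–Krause interaction W_R(θ) = (R − 2π|θ|)_+² on 𝕋 are: ∫_𝕋 W_R(θ) dθ = R³/(3π), and for every integer ℓ ≥ 1, ∫_𝕋 W_R(θ) e^{-2πiℓθ} dθ = (2/(πℓ³)) (ℓR − sin(ℓR)). -/

import Mathlib

open MeasureTheory Real Complex
open scoped Real

noncomputable section

/-- The normalized Haar (Lebesgue) probability measure on the circle `𝕋 = ℝ/ℤ`. -/
def circleMeasure : Measure UnitAddCircle := AddCircle.haarAddCircle

/-- The Hegselmann–Krause interaction `W_R(θ) = (R − 2π|θ|)_+²`, where `‖θ‖` is the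
distance from `θ ∈ ℝ/ℤ` to the nearest integer, i.e. the absolute value of the
representative of `θ` in `[-1/2, 1/2)`. -/
def WHK (R : ℝ) (θ : UnitAddCircle) : ℝ := max (R - 2 * π * ‖θ‖) 0 ^ 2

/-!
In the angle variable `t = 2πθ` the interaction is the even function `(R - |t|)₊²`, supported
in `[-R, R] ⊆ [-π, π]`. By evenness only the cosine part of `e^{-iℓt}` survives, so
`Ŵ_R(ℓ) = π⁻¹ ∫₀^R cos(ℓt) (R - t)² dt`, which an explicit antiderivative evaluates;
`ℓ = 0` gives the mean.
-/

theorem intervalIntegral.integral_of_even {E : Type*} [NormedAddCommGroup E] [NormedSpace ℝ E]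
    {f : ℝ → E} {a : ℝ} (hf : ∀ x, f (-x) = f x)
    (hint : IntervalIntegrable f volume (-a) a) :
    ∫ x in -a..a, f x = (2 : ℝ) • ∫ x in 0..a, f x := by
  have h0 : (0 : ℝ) ∈ Set.uIcc (-a) a := by
    rcases le_total 0 a with h | h <;> simp [h]
  rw [← intervalIntegral.integral_add_adjacent_intervals (b := 0)
    (hint.mono_set (Set.uIcc_subset_uIcc_left h0)) (hint.mono_set (Set.uIcc_subset_uIcc_right h0))]
  have hneg : ∫ x in -a..0, f x = ∫ x in 0..a, f x := by
    simpa [hf] using (intervalIntegral.integral_comp_neg (a := 0) (b := a) f).symm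
  rw [hneg, two_smul]

theorem intervalIntegral.integral_cexp_mul_I_mul_of_even {g : ℝ → ℝ} {a : ℝ}
    (hg : ∀ x, g (-x) = g x) (hint : IntervalIntegrable g volume (-a) a) (c : ℝ) :
    ∫ x in -a..a, cexp (c * x * I) * g x = ↑(∫ x in -a..a, Real.cos (c * x) * g x) := by
  have hint' : IntervalIntegrable (fun x => (g x : ℂ)) volume (-a) a :=
    ⟨hint.1.ofReal, hint.2.ofReal⟩
  have hexp (c : ℝ) : IntervalIntegrable (fun x : ℝ => cexp (c * x * I) * g x) volume (-a) a :=
    hint'.continuousOn_mul (by fun_prop)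
  have hneg : ∫ x in -a..a, cexp (-c * x * I) * g x = ∫ x in -a..a, cexp (c * x * I) * g x := by
    simpa [hg] using intervalIntegral.integral_comp_neg (a := -a) (b := a)
      (fun x : ℝ => cexp (c * x * I) * g x)
  calc ∫ x in -a..a, cexp (c * x * I) * g x
      = (∫ x in -a..a, (cexp (c * x * I) * g x + cexp (-c * x * I) * g x)) / 2 := by
        rw [intervalIntegral.integral_add (hexp c) (by simpa using hexp (-c)), hneg]; ring
    _ = ∫ x in -a..a, ((Real.cos (c * x) * g x : ℝ) : ℂ) := by
        rw [← intervalIntegral.integral_div]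
        refine intervalIntegral.integral_congr fun x _ => ?_
        push_cast
        rw [Complex.cos, neg_mul, ← neg_mul]
        ring
    _ = _ := intervalIntegral.integral_ofReal

def hkProfile (R t : ℝ) : ℝ := max (R - |t|) 0 ^ 2

theorem hkProfile_neg (R t : ℝ) : hkProfile R (-t) = hkProfile R t := by
  rw [hkProfile, hkProfile, abs_neg]

@[fun_prop]
theorem continuous_hkProfile (R : ℝ) : Continuous (hkProfile R) := by
  unfold hkProfile; fun_prop

theorem WHK_coe {R x : ℝ} (hx : |x| ≤ 1 / 2) : WHK R x = hkProfile R (2 * π * x) := by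
  rw [WHK, hkProfile, (AddCircle.norm_coe_eq_abs_iff (p := 1) one_ne_zero).2 (by simpa using hx),
    abs_mul, abs_of_pos two_pi_pos]

theorem integral_cos_mul_hkProfile {R a : ℝ} (hR : 0 ≤ R) (hRa : R ≤ a) (c : ℝ) :
    ∫ t in 0..a, Real.cos (c * t) * hkProfile R t
      = ∫ t in 0..R, Real.cos (c * t) * (R - t) ^ 2 := by
  have hint (u v : ℝ) :
      IntervalIntegrable (fun t => Real.cos (c * t) * hkProfile R t) volume u v :=
    (by fun_prop : Continuous _).intervalIntegrable u v
  rw [← intervalIntegral.integral_add_adjacent_intervals (hint 0 R) (hint R a)]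
  have hsupp : ∫ t in R..a, Real.cos (c * t) * hkProfile R t = 0 := by
    refine (intervalIntegral.integral_congr fun t ht => ?_).trans intervalIntegral.integral_zero
    rw [Set.uIcc_of_le hRa] at ht
    simp [hkProfile, abs_of_nonneg (hR.trans ht.1), ht.1]
  rw [hsupp, add_zero]
  refine intervalIntegral.integral_congr fun t ht => ?_
  rw [Set.uIcc_of_le hR] at ht
  simp [hkProfile, abs_of_nonneg ht.1, ht.2]

theorem integral_cos_mul_sub_sq {c : ℝ} (hc : c ≠ 0) (R : ℝ) :
    ∫ t in 0..R, Real.cos (c * t) * (R - t) ^ 2 = 2 * (c * R - Real.sin (c * R)) / c ^ 3 := by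
  have hderiv (t : ℝ) : HasDerivAt
      (fun t => (R - t) ^ 2 * Real.sin (c * t) / c - 2 * (R - t) * Real.cos (c * t) / c ^ 2
        - 2 * Real.sin (c * t) / c ^ 3) (Real.cos (c * t) * (R - t) ^ 2) t := by
    have hs := (hasDerivAt_const_mul c (x := t)).sin
    have hcos := (hasDerivAt_const_mul c (x := t)).cos
    have hl := (hasDerivAt_id' (x := t)).const_sub R
    refine (((((hl.fun_pow 2).mul hs).div_const c).sub
      (((hl.const_mul 2).mul hcos).div_const (c ^ 2))).sub
      ((hs.const_mul 2).div_const (c ^ 3))).congr_deriv ?_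
    field_simp
    ring
  rw [intervalIntegral.integral_eq_sub_of_hasDerivAt (fun t _ => hderiv t)
    ((by fun_prop : Continuous _).intervalIntegrable _ _)]
  simp only [sub_self, sub_zero, mul_zero, Real.sin_zero, Real.cos_zero]
  field_simp
  ring

theorem fourierCoeff_WHK {R : ℝ} (hR0 : 0 ≤ R) (hRπ : R ≤ π) (n : ℤ) :
    fourierCoeff (fun θ => (WHK R θ : ℂ)) n
      = ↑(π⁻¹ * ∫ t in 0..R, Real.cos (n * t) * (R - t) ^ 2) := by
  set F : ℝ → ℂ := fun t => cexp (↑(-n : ℝ) * t * I) * hkProfile R t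
  calc fourierCoeff (fun θ => (WHK R θ : ℂ)) n
      = ∫ x in -(1 / 2)..1 / 2, F (2 * π * x) := by
        rw [fourierCoeff_eq_intervalIntegral _ n (-(1 / 2)), div_one, one_smul,
          show -(1 / 2) + 1 = (1 / 2 : ℝ) by norm_num]
        refine intervalIntegral.integral_congr fun x hx => ?_
        rw [Set.uIcc_of_le (by norm_num)] at hx
        rw [smul_eq_mul, fourier_coe_apply, WHK_coe (abs_le.2 hx)]
        simp only [F]
        push_cast
        ring_nf
    _ = (2 * π)⁻¹ • ∫ t in -π..π, F t := by
        rw [intervalIntegral.integral_comp_mul_left F two_pi_pos.ne']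
        ring_nf
    _ = ↑(π⁻¹ * ∫ t in 0..R, Real.cos (n * t) * (R - t) ^ 2) := by
        rw [intervalIntegral.integral_cexp_mul_I_mul_of_even (hkProfile_neg R)
            ((continuous_hkProfile R).intervalIntegrable _ _),
          intervalIntegral.integral_of_even (fun t => by simp [hkProfile_neg])
            ((by fun_prop : Continuous _).intervalIntegrable _ _),
          integral_cos_mul_hkProfile hR0 hRπ]
        simp only [neg_mul, Real.cos_neg, smul_eq_mul, Complex.real_smul]
        push_cast
        ring

/-- **Fourier coefficients of the Hegselmann–Krause interaction.** For `R ∈ (0, π]`,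
`∫ W_R = R³/(3π)` and `Ŵ_R(ℓ) = (2/(πℓ³))(ℓR − sin(ℓR))` for every `ℓ ≥ 1`. -/
theorem HK_fourier_coeffs (R : ℝ) (hR0 : 0 < R) (hRπ : R ≤ π) :
    (∫ θ, WHK R θ ∂circleMeasure = R ^ 3 / (3 * π)) ∧
    (∀ ℓ : ℕ, 1 ≤ ℓ →
      fourierCoeff (fun θ => (WHK R θ : ℂ)) (ℓ : ℤ)
        = ((2 / (π * (ℓ : ℝ) ^ 3) * ((ℓ : ℝ) * R - Real.sin (ℓ * R)) : ℝ) : ℂ)) := by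
  refine ⟨?_, fun ℓ hℓ => ?_⟩
  · have hmean := fourierCoeff_WHK hR0.le hRπ 0
    simp only [fourierCoeff, neg_zero, fourier_zero, one_smul, integral_complex_ofReal] at hmean
    rw [circleMeasure, Complex.ofReal_injective hmean]
    simp only [Int.cast_zero, zero_mul, Real.cos_zero, one_mul,
      intervalIntegral.integral_comp_sub_left (fun t => t ^ 2) R, integral_pow]
    field_simp
    ring
  · have hℓ0 : (ℓ : ℝ) ≠ 0 := Nat.cast_ne_zero.2 (Nat.one_le_iff_ne_zero.1 hℓ)
    rw [fourierCoeff_WHK hR0.le hRπ, Int.cast_natCast, integral_cos_mul_sub_sq hℓ0]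
    congr 1
    field_simp
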